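/- A test determines at most one execution along a given path of a guarded-command program: consider a program over valuations Val = (Var → ℤ) in which every transition is either an assignment transition carrying data (g, x, f) with transition relation τ(v, v') ↔ g(v) ∧ v' = v[x ↦ f(v)], or an input transition carrying data (g, x) with transition relation τ(v, v') ↔ g(v) ∧ ∃ w : ℤ, v' = v[x ↦ w]. Define the test of an execution v₀,…,v_n along a path e₀,…,e_{n−1} to be the list, in order, of the values v_{i+1}(x) for those indices i at which eᵢ is an input transition on variable x. Then any two executions along the same path that have the same initial valuation v₀ and the same test are equal. -/
import Mathlib


/-- A guarded command: either a guarded assignment `x := f(v)` or a guarded input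
`x := input()`. -/
inductive Cmd (Var : Type*) where
  | assign (g : (Var → ℤ) → Prop) (x : Var) (f : (Var → ℤ) → ℤ)
  | input (g : (Var → ℤ) → Prop) (x : Var)

/-- The transition relation of a guarded command. -/
def Cmd.rel {Var : Type*} [DecidableEq Var] :
    Cmd Var → (Var → ℤ) → (Var → ℤ) → Prop
  | .assign g x f => fun v v' => g v ∧ v' = Function.update v x (f v)
  | .input g x => fun v v' => g v ∧ ∃ w : ℤ, v' = Function.update v x w

/-- A guarded-command program: an initial location and a set of transitions
`(ℓ, c, ℓ')` carrying commands. -/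
structure CProgram (Loc Var : Type*) where
  init : Loc
  E : Set (Loc × Cmd Var × Loc)

/-- `e 0, …, e (n-1)` is a path of `P`. -/
def CIsPath {Loc Var : Type*} (P : CProgram Loc Var) (n : ℕ)
    (e : ℕ → Loc × Cmd Var × Loc) : Prop :=
  (∀ i < n, e i ∈ P.E) ∧ (0 < n → (e 0).1 = P.init) ∧
    ∀ i, i + 1 < n → (e i).2.2 = (e (i + 1)).1

/-- `v 0, …, v n` is an execution along the transitions `e 0, …, e (n-1)`. -/
def CIsExec {Loc Var : Type*} [DecidableEq Var] (n : ℕ)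
    (e : ℕ → Loc × Cmd Var × Loc) (v : ℕ → Var → ℤ) : Prop :=
  ∀ i < n, ((e i).2.1).rel (v i) (v (i + 1))

/-- The test of an execution `v` along the path `e`: the list, in order, of the values
`v (i+1) x` at the input transitions among `e 0, …, e (n-1)`. -/
def testOf {Loc Var : Type*} (e : ℕ → Loc × Cmd Var × Loc) (v : ℕ → Var → ℤ) :
    ℕ → List ℤ
  | 0 => []
  | n + 1 =>
      testOf e v n ++
        match (e n).2.1 with
        | .input _ x => [v (n + 1) x]
        | .assign _ _ _ => []

lemma testOf_prefix {Loc Var : Type*} (e : ℕ → Loc × Cmd Var × Loc) (v : ℕ → Var → ℤ)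
    {i n : ℕ} (h : i ≤ n) : testOf e v i <+: testOf e v n := by
  induction n with
  | zero => simp_all
  | succ n ih =>
    rcases Nat.lt_or_ge i (n + 1) with h' | h'
    · exact (ih (Nat.lt_succ_iff.mp h')).trans ⟨_, rfl⟩
    · have : i = n + 1 := le_antisymm h h'
      subst this; exact List.prefix_refl _

/-- A test determines at most one execution along a given path: two executions along the
same path with the same initial valuation and the same test are equal. -/
theorem test_determines_execution {Loc Var : Type*} [DecidableEq Var]
    (P : CProgram Loc Var) (n : ℕ) (e : ℕ → Loc × Cmd Var × Loc)
    (hpath : CIsPath P n e) (v₁ v₂ : ℕ → Var → ℤ)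
    (hx₁ : CIsExec n e v₁) (hx₂ : CIsExec n e v₂)
    (h0 : v₁ 0 = v₂ 0) (htest : testOf e v₁ n = testOf e v₂ n) :
    ∀ i ≤ n, v₁ i = v₂ i := by
  have key : ∀ i ≤ n, v₁ i = v₂ i ∧ testOf e v₁ i = testOf e v₂ i := by
    intro i
    induction i with
    | zero => intro _; exact ⟨h0, rfl⟩
    | succ i ih =>
      intro hi
      obtain ⟨hv, ht⟩ := ih (Nat.le_of_succ_le hi)
      have hrel₁ := hx₁ i (by omega)
      have hrel₂ := hx₂ i (by omega)
      cases hc : (e i).2.1 with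
      | assign g x f =>
        rw [hc] at hrel₁ hrel₂
        simp only [Cmd.rel] at hrel₁ hrel₂
        refine ⟨?_, ?_⟩
        · rw [hrel₁.2, hrel₂.2, hv]
        · simp [testOf, hc, ht]
      | input g x =>
        rw [hc] at hrel₁ hrel₂
        obtain ⟨-, w₁, hw₁⟩ := hrel₁
        obtain ⟨-, w₂, hw₂⟩ := hrel₂
        obtain ⟨t₁, h1⟩ := testOf_prefix e v₁ (n := n) (i := i + 1) hi
        obtain ⟨t₂, h2⟩ := testOf_prefix e v₂ (n := n) (i := i + 1) hi
        have e1 : testOf e v₁ (i + 1) = testOf e v₁ i ++ [v₁ (i + 1) x] := by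
          simp [testOf, hc]
        have e2 : testOf e v₂ (i + 1) = testOf e v₂ i ++ [v₂ (i + 1) x] := by
          simp [testOf, hc]
        rw [e1] at h1; rw [e2] at h2
        rw [← h1, ← h2, ht, List.append_assoc, List.append_assoc,
          List.append_right_inj] at htest
        have hx : v₁ (i + 1) x = v₂ (i + 1) x := by
          simpa using congrArg (fun l => l.head?) htest
        have hw : w₁ = w₂ := by
          rw [hw₁, hw₂] at hx
          simpa using hx
        have hveq : v₁ (i + 1) = v₂ (i + 1) := by rw [hw₁, hw₂, hv, hw]
        exact ⟨hveq, by rw [e1, e2, ht, hveq]⟩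
  exact fun i hi => (key i hi).1
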